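/- Consider in ℝ³ the vector fields f(x) = ((3/2)(x¹)² if x¹ < 0, (x¹)² if x¹ ≥ 0) ∂/∂x² + ∂/∂x³ and g = ∂/∂x¹. Then f is C^{1,1} but not C², and the set-valued step-3 bracket at any point with x¹ = 0 equals [g,[f,g]]_set(0, x², x³) = { α ∂/∂x² : α ∈ [−3, −2] }. -/

import Mathlib

/-!
Writing `fEx = (0, φ(x¹), 1)`, the profile `φ` glues `3t²/2` and `t²` with matching value and
slope at `0`, so `φ` is `C¹` with `φ'` (slopes `3` and `2`) Lipschitz but not differentiable at `0`.
Since `gEx` is constant, `[fEx, gEx] = (0, -φ'(x¹), 0)`: this is differentiable exactly off the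
plane `x¹ = 0`, which already rules out `fEx ∈ C²`. For the same reason only the limits of
`D[fEx, gEx](u_k) · gEx` enter the step-3 bracket, and these are `-3 ∂₂` (from `x¹ < 0`) and
`-2 ∂₂` (from `x¹ > 0`); their convex hull is the claimed segment.
-/

open Set Filter Topology

/-- The pointwise Lie bracket `[X,Y] = DY·X − DX·Y` on ℝ³ = ℝ×ℝ×ℝ. -/
noncomputable def lieBracket (X Y : ℝ × ℝ × ℝ → ℝ × ℝ × ℝ) :
    ℝ × ℝ × ℝ → ℝ × ℝ × ℝ :=
  fun x => fderiv ℝ Y x (X x) - fderiv ℝ X x (Y x)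

/-- The step-3 set-valued bracket `[Z,[X,Y]]_set`. -/
noncomputable def setLieBracket3 (X Y Z : ℝ × ℝ × ℝ → ℝ × ℝ × ℝ) (x : ℝ × ℝ × ℝ) :
    Set (ℝ × ℝ × ℝ) :=
  convexHull ℝ {v | ∃ u w : ℕ → ℝ × ℝ × ℝ,
    (∀ k, DifferentiableAt ℝ (lieBracket X Y) (u k)) ∧
    (∀ k, DifferentiableAt ℝ Z (w k)) ∧
    Tendsto u atTop (𝓝 x) ∧ Tendsto w atTop (𝓝 x) ∧
    Tendsto (fun k =>
      fderiv ℝ (lieBracket X Y) (u k) (Z (w k)) -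
      fderiv ℝ Z (w k) (lieBracket X Y (u k))) atTop (𝓝 v)}

noncomputable def fEx : ℝ × ℝ × ℝ → ℝ × ℝ × ℝ :=
  fun x => (0, (if x.1 < 0 then (3/2) * x.1^2 else x.1^2, 1))

def gEx : ℝ × ℝ × ℝ → ℝ × ℝ × ℝ := fun _ => (1, (0, 0))

theorem hasDerivAt_ite_lt_of_eq {a b : ℝ → ℝ} {d s : ℝ} (ha : HasDerivAt a d s)
    (hb : HasDerivAt b d s) (hab : a s = b s) :
    HasDerivAt (fun t => if t < s then a t else b t) d s := by
  have hleft : HasDerivWithinAt (fun t => if t < s then a t else b t) d (Iic s) s :=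
    ha.hasDerivWithinAt.congr (fun t ht => by
      rcases (mem_Iic.mp ht).lt_or_eq with h | rfl
      · simp [h]
      · simp [hab]) (by simp [hab])
  have hright : HasDerivWithinAt (fun t => if t < s then a t else b t) d (Ici s) s :=
    hb.hasDerivWithinAt.congr (fun t ht => by simp [not_lt.mpr (mem_Ici.mp ht)]) (by simp)
  simpa [Iic_union_Ici] using hleft.union hright

noncomputable def phi (t : ℝ) : ℝ := if t < 0 then 3 / 2 * t ^ 2 else t ^ 2

noncomputable def phi' (t : ℝ) : ℝ := if t < 0 then 3 * t else 2 * t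

theorem hasDerivAt_phi'_of_neg {t : ℝ} (ht : t < 0) : HasDerivAt phi' 3 t :=
  (((hasDerivAt_id t).const_mul 3).congr_of_eventuallyEq (by
    filter_upwards [Iio_mem_nhds ht] with s hs
    simp [phi', mem_Iio.mp hs])).congr_deriv (mul_one 3)

theorem hasDerivAt_phi'_of_pos {t : ℝ} (ht : 0 < t) : HasDerivAt phi' 2 t :=
  (((hasDerivAt_id t).const_mul 2).congr_of_eventuallyEq (by
    filter_upwards [Ioi_mem_nhds ht] with s hs
    simp [phi', (mem_Ioi.mp hs).not_gt])).congr_deriv (mul_one 2)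

theorem hasDerivAt_phi (t : ℝ) : HasDerivAt phi (phi' t) t := by
  have hl : HasDerivAt (fun s : ℝ => 3 / 2 * s ^ 2) (3 * t) t :=
    ((hasDerivAt_pow 2 t).const_mul (3 / 2 : ℝ)).congr_deriv (by ring)
  have hr : HasDerivAt (fun s : ℝ => s ^ 2) (2 * t) t := (hasDerivAt_pow 2 t).congr_deriv (by ring)
  rcases lt_trichotomy t 0 with ht | rfl | ht
  · refine (hl.congr_of_eventuallyEq ?_).congr_deriv (by simp [phi', ht])
    filter_upwards [Iio_mem_nhds ht] with s hs
    simp [phi, mem_Iio.mp hs]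
  · rw [show phi' 0 = 0 by simp [phi']]
    exact hasDerivAt_ite_lt_of_eq (by simpa using hl) (by simpa using hr) (by simp)
  · refine (hr.congr_of_eventuallyEq ?_).congr_deriv (by simp [phi', ht.not_gt])
    filter_upwards [Ioi_mem_nhds ht] with s hs
    simp [phi, (mem_Ioi.mp hs).not_gt]

theorem lipschitzWith_phi' : LipschitzWith 3 phi' := by
  refine LipschitzWith.of_dist_le_mul fun s t => ?_
  simp only [Real.dist_eq, NNReal.coe_ofNat, phi']
  split_ifs <;> rw [abs_le] <;> constructor <;>
    cases abs_cases (s - t) <;> linarith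

theorem not_differentiableAt_phi'_zero : ¬ DifferentiableAt ℝ phi' 0 := by
  intro h
  have habs : (abs : ℝ → ℝ) = fun t : ℝ => 5 * t - 2 * phi' t := by
    funext t
    unfold phi'
    split_ifs with ht
    · rw [abs_of_neg ht]; ring
    · rw [abs_of_nonneg (not_lt.mp ht)]; ring
  exact not_differentiableAt_abs_zero
    (habs ▸ (differentiableAt_id.const_mul 5).sub (h.const_mul 2))

def shearField (h : ℝ → ℝ) (c : ℝ) : ℝ × ℝ × ℝ → ℝ × ℝ × ℝ := fun x => (0, (h x.1, c))

theorem fEx_eq_shearField : fEx = shearField phi 1 := rfl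

theorem hasFDerivAt_shearField {h : ℝ → ℝ} {h' : ℝ} (c : ℝ) {x : ℝ × ℝ × ℝ}
    (hh : HasDerivAt h h' x.1) :
    HasFDerivAt (shearField h c)
      ((ContinuousLinearMap.fst ℝ ℝ (ℝ × ℝ)).smulRight ((0, (h', 0)) : ℝ × ℝ × ℝ)) x := by
  have hcurve : HasDerivAt (fun t => ((0 : ℝ), (h t, c))) ((0 : ℝ), (h', (0 : ℝ))) x.1 :=
    (hasDerivAt_const _ _).prodMk (hh.prodMk (hasDerivAt_const _ _))
  refine (hcurve.hasFDerivAt.comp x hasFDerivAt_fst).congr_fderiv ?_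
  ext <;> simp

theorem differentiableAt_shearField_iff {h : ℝ → ℝ} {c : ℝ} {x : ℝ × ℝ × ℝ} :
    DifferentiableAt ℝ (shearField h c) x ↔ DifferentiableAt ℝ h x.1 := by
  refine ⟨fun hd => ?_, fun hd => (hasFDerivAt_shearField c hd.hasDerivAt).differentiableAt⟩
  have hline : DifferentiableAt ℝ (fun t : ℝ => (t, x.2)) x.1 :=
    differentiableAt_id.prodMk (differentiableAt_const _)
  exact (hd.comp x.1 hline).snd.fst

theorem lipschitzWith_fderiv_shearField {h h' : ℝ → ℝ} {K : NNReal}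
    (hh : ∀ t, HasDerivAt h (h' t) t) (hK : LipschitzWith K h') (c : ℝ) :
    LipschitzWith K (fderiv ℝ (shearField h c)) := by
  refine LipschitzWith.of_dist_le_mul fun x y => ?_
  rw [(hasFDerivAt_shearField c (hh x.1)).fderiv, (hasFDerivAt_shearField c (hh y.1)).fderiv,
    dist_eq_norm]
  calc _ = ‖(ContinuousLinearMap.fst ℝ ℝ (ℝ × ℝ)).smulRight
          ((0, (h' x.1 - h' y.1, 0)) : ℝ × ℝ × ℝ)‖ := by
        congr 1; exact ContinuousLinearMap.ext fun z => by simp [mul_sub]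
    _ ≤ ‖ContinuousLinearMap.fst ℝ ℝ (ℝ × ℝ)‖ * ‖((0, (h' x.1 - h' y.1, 0)) : ℝ × ℝ × ℝ)‖ :=
        (ContinuousLinearMap.norm_smulRight_apply _ _).le
    _ ≤ 1 * dist (h' x.1) (h' y.1) := by
        gcongr
        · exact ContinuousLinearMap.norm_fst_le ℝ ℝ (ℝ × ℝ)
        · simp [Real.dist_eq]
    _ ≤ K * dist x y := by
        rw [one_mul]
        exact (hK.dist_le_mul _ _).trans
          (by gcongr; exact (le_max_left _ _).trans_eq Prod.dist_eq.symm)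

theorem lieBracket_const_right (X : ℝ × ℝ × ℝ → ℝ × ℝ × ℝ) (v : ℝ × ℝ × ℝ) :
    lieBracket X (fun _ => v) = fun x => -fderiv ℝ X x v := by
  funext x
  simp [lieBracket]

theorem ContDiff.differentiable_lieBracket_const_right {X : ℝ × ℝ × ℝ → ℝ × ℝ × ℝ}
    (hX : ContDiff ℝ 2 X) (v : ℝ × ℝ × ℝ) : Differentiable ℝ (lieBracket X fun _ => v) := by
  rw [lieBracket_const_right]
  exact ((hX.fderiv_right (by norm_num)).differentiable one_ne_zero).clm_apply
    (differentiable_const v) |>.neg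

section LimitingFDeriv

variable {E F : Type*} [NormedAddCommGroup E] [NormedSpace ℝ E] [NormedAddCommGroup F]
  [NormedSpace ℝ F]

/-- The Bouligand subdifferential `∂_B f(x)`, applied to `v`. -/
def limitingFDerivApply (f : E → F) (x v : E) : Set F :=
  {w | ∃ u : ℕ → E, (∀ k, DifferentiableAt ℝ f (u k)) ∧ Tendsto u atTop (𝓝 x) ∧
    Tendsto (fun k => fderiv ℝ f (u k) v) atTop (𝓝 w)}

theorem limitingFDerivApply_subset {f : E → F} {x v : E} {S : Set F} (hS : IsClosed S)
    (h : ∀ y, DifferentiableAt ℝ f y → fderiv ℝ f y v ∈ S) : limitingFDerivApply f x v ⊆ S :=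
  fun _ ⟨_, hu, _, hlim⟩ => hS.mem_of_tendsto hlim (.of_forall fun k => h _ (hu k))

theorem apply_mem_limitingFDerivApply {f : E → F} {L : E →L[ℝ] F} {u : ℕ → E} {x : E}
    (hu : Tendsto u atTop (𝓝 x)) (hf : ∀ k, HasFDerivAt f L (u k)) (v : E) :
    L v ∈ limitingFDerivApply f x v :=
  ⟨u, fun k => (hf k).differentiableAt, hu, by
    simp only [fun k => (hf k).fderiv]; exact tendsto_const_nhds⟩

end LimitingFDeriv

theorem setLieBracket3_const_right (X Y : ℝ × ℝ × ℝ → ℝ × ℝ × ℝ) (v x : ℝ × ℝ × ℝ) :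
    setLieBracket3 X Y (fun _ => v) x =
      convexHull ℝ (limitingFDerivApply (lieBracket X Y) x v) := by
  refine congrArg (convexHull ℝ) (Set.ext fun w => ⟨?_, ?_⟩)
  · rintro ⟨u, _, hu, -, hux, -, hlim⟩
    exact ⟨u, hu, hux, by simpa using hlim⟩
  · rintro ⟨u, hu, hux, hlim⟩
    exact ⟨u, fun _ => x, hu, fun _ => differentiableAt_const v, hux, tendsto_const_nhds,
      by simpa using hlim⟩

theorem lieBracket_fEx_gEx : lieBracket fEx gEx = shearField (-phi') 0 := by
  funext x
  rw [show gEx = fun _ => (1, (0, 0)) from rfl, lieBracket_const_right, fEx_eq_shearField]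
  dsimp only
  rw [(hasFDerivAt_shearField 1 (hasDerivAt_phi x.1)).fderiv]
  simp [shearField]

theorem not_differentiableAt_lieBracket_fEx_gEx {x : ℝ × ℝ × ℝ} (hx : x.1 = 0) :
    ¬ DifferentiableAt ℝ (lieBracket fEx gEx) x := by
  rw [lieBracket_fEx_gEx, differentiableAt_shearField_iff, hx]
  exact fun h => not_differentiableAt_phi'_zero (by simpa using h.neg)

theorem limitingFDerivApply_lieBracket_fEx_gEx (y : ℝ × ℝ) :
    limitingFDerivApply (lieBracket fEx gEx) (0, y) (1, (0, 0)) =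
      {(0, (-3, 0)), (0, (-2, 0))} := by
  have hinv : Tendsto (fun k : ℕ => 1 / ((k : ℝ) + 1)) atTop (𝓝 0) :=
    tendsto_one_div_add_atTop_nhds_zero_nat
  have hpos (k : ℕ) : 0 < 1 / ((k : ℝ) + 1) := by positivity
  refine Subset.antisymm
    (limitingFDerivApply_subset ((finite_singleton _).insert _).isClosed fun z hz => ?_) ?_
  · have hz1 : z.1 ≠ 0 := fun h0 => not_differentiableAt_lieBracket_fEx_gEx h0 hz
    rw [lieBracket_fEx_gEx]
    rcases hz1.lt_or_gt with hneg | hpos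
    · simp [(hasFDerivAt_shearField 0 (hasDerivAt_phi'_of_neg hneg).neg).fderiv]
    · simp [(hasFDerivAt_shearField 0 (hasDerivAt_phi'_of_pos hpos).neg).fderiv]
  · rw [lieBracket_fEx_gEx]
    refine insert_subset_iff.mpr ⟨?_, singleton_subset_iff.mpr ?_⟩
    · simpa using apply_mem_limitingFDerivApply (u := fun k => (-(1 / ((k : ℝ) + 1)), y))
        (by simpa using hinv.neg.prodMk_nhds tendsto_const_nhds)
        (fun k => hasFDerivAt_shearField 0 (hasDerivAt_phi'_of_neg (neg_neg_of_pos (hpos k))).neg)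
        (1, (0, 0))
    · simpa using apply_mem_limitingFDerivApply (u := fun k => (1 / ((k : ℝ) + 1), y))
        (hinv.prodMk_nhds tendsto_const_nhds)
        (fun k => hasFDerivAt_shearField 0 (hasDerivAt_phi'_of_pos (hpos k)).neg)
        (1, (0, 0))

theorem segment_vertical {a b : ℝ} (hab : a ≤ b) :
    segment ℝ ((0 : ℝ), (a, (0 : ℝ))) (0, (b, 0)) = {v | ∃ α ∈ Icc a b, v = (0, (α, 0))} := by
  let e : ℝ →ₗ[ℝ] ℝ × ℝ × ℝ := LinearMap.inr ℝ ℝ (ℝ × ℝ) ∘ₗ LinearMap.inl ℝ ℝ ℝ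
  have himage : e '' Icc a b = segment ℝ (e a) (e b) := by
    rw [← segment_eq_Icc hab]
    exact image_segment ℝ e.toAffineMap a b
  calc _ = e '' Icc a b := himage.symm
    _ = _ := by ext v; simp [e, eq_comm]

theorem stmt_13 :
    Differentiable ℝ fEx ∧ LocallyLipschitz (fderiv ℝ fEx) ∧
    ¬ ContDiff ℝ 2 fEx ∧
    ∀ x2 x3 : ℝ,
      setLieBracket3 fEx gEx gEx (0, (x2, x3)) =
        {v : ℝ × ℝ × ℝ | ∃ α ∈ Icc (-3:ℝ) (-2), v = (0, (α, 0))} := by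
  refine ⟨fun x => (hasFDerivAt_shearField 1 (hasDerivAt_phi x.1)).differentiableAt,
    (lipschitzWith_fderiv_shearField hasDerivAt_phi lipschitzWith_phi' 1).locallyLipschitz,
    fun h => not_differentiableAt_lieBracket_fEx_gEx (x := 0) rfl
      (h.differentiable_lieBracket_const_right _ _), fun x2 x3 => ?_⟩
  refine (setLieBracket3_const_right fEx gEx (1, (0, 0)) _).trans ?_
  rw [limitingFDerivApply_lieBracket_fEx_gEx, convexHull_pair, segment_vertical (by norm_num)]
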